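/- arXiv:1305.5324 — 3 statements merged into one kernel-verified Lean document; each statement's English description precedes it below -/
import Mathlib

section
/- Let d ≥ 1 be an integer and let λ > 0. If u is a tempered distribution on ℝ^d (i.e. a continuous linear functional on the Schwartz space S(ℝ^d)) such that u(Δψ) = λ·u(ψ) for every Schwartz function ψ ∈ S(ℝ^d), where Δψ = Σ_{i=1}^d ∂²ψ/∂x_i², then u = 0. -/
open SchwartzMap

/-- The pointwise Laplacian of a function on `ℝ^d`: the sum of the second derivatives
in the coordinate directions. -/
noncomputable def laplacianE {d : ℕ} (f : EuclideanSpace ℝ (Fin d) → ℝ)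
    (x : EuclideanSpace ℝ (Fin d)) : ℝ :=
  ∑ i : Fin d, iteratedFDeriv ℝ 2 f x ![EuclideanSpace.single i 1, EuclideanSpace.single i 1]

/-! On the Fourier side `Δ - λ` is multiplication by `-(4π²‖ξ‖² + λ)`, which for `λ > 0` has a
reciprocal of temperate growth, so `Δ - λ` is surjective on Schwartz space (for real-valued
functions, solve for the complexification and take real parts). Given `φ`, pick `ψ` with
`Δ ψ = λ ψ + φ`; then `λ u ψ = u (Δ ψ) = λ u ψ + u φ`, so `u φ = 0`. -/

open Laplacian Real

theorem laplacianE_eq_laplacian {d : ℕ} (f : EuclideanSpace ℝ (Fin d) → ℝ) :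
    laplacianE f = Δ f := by
  rw [InnerProductSpace.laplacian_eq_iteratedFDeriv_orthonormalBasis f
    (EuclideanSpace.basisFun (Fin d) ℝ)]
  ext x
  simp [laplacianE, EuclideanSpace.basisFun_apply]

theorem Function.hasTemperateGrowth_inv_mul_norm_sq_add {H : Type*} [NormedAddCommGroup H]
    [InnerProductSpace ℝ H] {a c : ℝ} (ha : 0 ≤ a) (hc : 0 < c) :
    (fun x : H ↦ (a * ‖x‖ ^ 2 + c)⁻¹).HasTemperateGrowth := by
  -- a rescaling reduces this to the Bessel potential `(1 + ‖x‖ ^ 2)⁻¹`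
  have hscale : (fun x : H ↦ (a * ‖x‖ ^ 2 + c)⁻¹) =
      fun x ↦ c⁻¹ * (1 + ‖(√a / √c) • x‖ ^ 2) ^ (-1 : ℝ) := by
    ext x
    rw [norm_smul, mul_pow, Real.norm_eq_abs, sq_abs, div_pow, Real.sq_sqrt ha, Real.sq_sqrt hc.le,
      Real.rpow_neg_one, ← mul_inv]
    congr 1
    field_simp
    ring
  rw [hscale]
  exact (HasTemperateGrowth.const c⁻¹).mul <| (hasTemperateGrowth_one_add_norm_sq_rpow H (-1)).comp
    ((√a / √c) • ContinuousLinearMap.id ℝ H).hasTemperateGrowth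

namespace SchwartzMap

variable {E : Type*} [NormedAddCommGroup E] [InnerProductSpace ℝ E] [FiniteDimensional ℝ E]

theorem laplacian_postcompCLM {F G : Type*} [NormedAddCommGroup F] [NormedSpace ℝ F]
    [NormedAddCommGroup G] [NormedSpace ℝ G] (L : F →L[ℝ] G) (f : 𝓢(E, F)) :
    Δ (f.postcompCLM L) = (Δ f).postcompCLM L := by
  ext x
  simp only [laplacian_apply, postcompCLM_apply]
  exact (f.smooth 2).contDiffAt.laplacian_CLM_comp_left

variable [MeasurableSpace E] [BorelSpace E]
  {F : Type*} [NormedAddCommGroup F] [NormedSpace ℂ F] [CompleteSpace F]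

theorem laplacian_sub_smul_eq_fourierMultiplierCLM (c : ℝ) (f : 𝓢(E, F)) :
    Δ f - c • f = fourierMultiplierCLM F (fun ξ : E ↦ -((2 * π) ^ 2 * ‖ξ‖ ^ 2 + c)) f := by
  have hsymb : (fun ξ : E ↦ -((2 * π) ^ 2 * ‖ξ‖ ^ 2 + c)) =
      (-(2 * π) ^ 2) • (fun ξ : E ↦ ‖ξ‖ ^ 2) - fun _ ↦ c := by
    ext ξ
    simp only [Pi.sub_apply, Pi.smul_apply, smul_eq_mul]
    ring
  rw [laplacian_eq_fourierMultiplierCLM, hsymb, fourierMultiplierCLM_apply,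
    fourierMultiplierCLM_apply, smulLeftCLM_sub (by fun_prop) (by fun_prop),
    smulLeftCLM_smul (by fun_prop)]
  simp [sub_eq_add_neg]

theorem exists_laplacian_eq_smul_add {c : ℝ} (hc : 0 < c) (f : 𝓢(E, F)) :
    ∃ g : 𝓢(E, F), Δ g = c • g + f := by
  have hsymb : ((fun ξ : E ↦ -((2 * π) ^ 2 * ‖ξ‖ ^ 2 + c)) *
      fun ξ ↦ ((2 * π) ^ 2 * ‖ξ‖ ^ 2 + c)⁻¹) = fun _ ↦ -1 := by
    ext ξ
    have hne : (2 * π) ^ 2 * ‖ξ‖ ^ 2 + c ≠ 0 := by positivity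
    rw [Pi.mul_apply, neg_mul, mul_inv_cancel₀ hne]
  refine ⟨-fourierMultiplierCLM F (fun ξ : E ↦ ((2 * π) ^ 2 * ‖ξ‖ ^ 2 + c)⁻¹) f,
    eq_add_of_sub_eq' ?_⟩
  rw [laplacian_sub_smul_eq_fourierMultiplierCLM, map_neg,
    fourierMultiplierCLM_fourierMultiplierCLM_apply (by fun_prop)
      (Function.hasTemperateGrowth_inv_mul_norm_sq_add (by positivity) hc), hsymb]
  simp

theorem exists_laplacian_eq_smul_add_real {c : ℝ} (hc : 0 < c) (f : 𝓢(E, ℝ)) :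
    ∃ g : 𝓢(E, ℝ), Δ g = c • g + f := by
  obtain ⟨g, hg⟩ := exists_laplacian_eq_smul_add hc (f.postcompCLM Complex.ofRealCLM)
  refine ⟨g.postcompCLM Complex.reCLM, ?_⟩
  ext x
  simp [laplacian_postcompCLM, hg]

end SchwartzMap

theorem stmt0_general (d : ℕ) (lam : ℝ) (hlam : 0 < lam)
    (u : SchwartzMap (EuclideanSpace ℝ (Fin d)) ℝ →L[ℝ] ℝ)
    (h : ∀ ψ φ : SchwartzMap (EuclideanSpace ℝ (Fin d)) ℝ,
      (∀ x, φ x = laplacianE (⇑ψ) x) → u φ = lam * u ψ) :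
    u = 0 := by
  ext φ
  obtain ⟨ψ, hψ⟩ := SchwartzMap.exists_laplacian_eq_smul_add_real hlam φ
  have hu := h ψ (Δ ψ) fun x ↦ by rw [SchwartzMap.laplacian_apply, laplacianE_eq_laplacian]
  rw [hψ, map_add, map_smul, smul_eq_mul] at hu
  simpa using hu

/-- If a tempered distribution `u` on `ℝ^d` satisfies `u (Δ ψ) = λ · u ψ` for every Schwartz
function `ψ` and some `λ > 0`, then `u = 0`. -/
theorem stmt0 (d : ℕ) (hd : 1 ≤ d) (lam : ℝ) (hlam : 0 < lam)
    (u : SchwartzMap (EuclideanSpace ℝ (Fin d)) ℝ →L[ℝ] ℝ)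
    (h : ∀ ψ φ : SchwartzMap (EuclideanSpace ℝ (Fin d)) ℝ,
      (∀ x, φ x = laplacianE (⇑ψ) x) → u φ = lam * u ψ) :
    u = 0 :=
  stmt0_general d lam hlam u h
end

section
/- Let m ≥ 1 be an integer and λ > 0. Define, for x₀ > 0 and y ∈ ℝ^m, I(x₀,y) = ∫₀^∞ e^{−λt}·(x₀/(2√π·t^{3/2}))·exp(−x₀²/(4t))·exp(−(2t)^m·|y|²/2) dt. Then there exists a constant c > 0 (depending only on m and λ) such that for all x₀ > 0 and y ∈ ℝ^m: I(x₀,y)² ≤ c·x₀^{−2} when |y| ≤ 1, and I(x₀,y)² ≤ c·x₀^{−4}·|y|^{−1/m} when |y| > 1. -/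
/-!
Bound `e^{-u}` by `s^s u^{-s}` (from `u/s ≤ e^{u/s}`) inside the integrand. With `s = 1` the
Gaussian factor `e^{-x₀²/(4t)}` is at most `4t/x₀²`; with `s = 3/2` it absorbs the whole singularity
`t^{-3/2}`, and the factor `e^{-(2t)^m|y|²/2}` with `s = 1/(2m)` supplies `t^{-1/2} |y|^{-1/m}`.
Either way the integrand is dominated by a multiple of `t^{-1/2} e^{-λt}`, whose integral is
`Γ(1/2) λ^{-1/2} = √(π/λ)`.
-/

open Real MeasureTheory Set

noncomputable def ellipticFT (m : ℕ) (lam x₀ : ℝ) (y : EuclideanSpace ℝ (Fin m)) : ℝ :=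
  ∫ t in Set.Ioi (0 : ℝ),
    Real.exp (-lam * t) * (x₀ / (2 * Real.sqrt Real.pi * t ^ ((3 : ℝ) / 2)))
      * Real.exp (-x₀ ^ 2 / (4 * t)) * Real.exp (-(2 * t) ^ m * ‖y‖ ^ 2 / 2)

theorem Real.exp_neg_le_rpow_mul_rpow_neg {s u : ℝ} (hs : 0 < s) (hu : 0 < u) :
    exp (-u) ≤ s ^ s * u ^ (-s) := by
  have hlin : u / s ≤ exp (u / s) := by linarith [add_one_le_exp (u / s)]
  have hpow : (u / s) ^ s ≤ exp u := by
    calc (u / s) ^ s ≤ exp (u / s) ^ s := rpow_le_rpow (by positivity) hlin hs.le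
      _ = exp u := by rw [← exp_mul, div_mul_cancel₀ u hs.ne']
  calc exp (-u) = (exp u)⁻¹ := exp_neg u
    _ ≤ ((u / s) ^ s)⁻¹ := inv_anti₀ (by positivity) hpow
    _ = s ^ s * u ^ (-s) := by
      rw [div_rpow hu.le hs.le, inv_div, rpow_neg hu.le, div_eq_mul_inv]

theorem Real.exp_neg_le_rpow_neg {s u : ℝ} (hs₀ : 0 < s) (hs₁ : s ≤ 1) (hu : 0 < u) :
    exp (-u) ≤ u ^ (-s) :=
  (exp_neg_le_rpow_mul_rpow_neg hs₀ hu).trans <|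
    mul_le_of_le_one_left (by positivity) (rpow_le_one hs₀.le hs₁ hs₀.le)

theorem integral_rpow_neg_half_mul_exp_neg_mul {lam : ℝ} (hlam : 0 < lam) :
    ∫ t in Ioi (0 : ℝ), t ^ (-(1 : ℝ) / 2) * exp (-lam * t) = √π / √lam := by
  have h := integral_rpow_mul_exp_neg_mul_Ioi (a := 1 / 2) one_half_pos hlam
  rw [Gamma_one_half_eq, ← sqrt_eq_rpow, sqrt_div' _ hlam.le, sqrt_one] at h
  norm_num at h ⊢
  rw [h]
  ring

theorem div_mul_exp_neg_sq_div_le {s x t : ℝ} (hs : 0 < s) (hx : 0 < x) (ht : 0 < t) :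
    x / (2 * √π * t ^ ((3 : ℝ) / 2)) * exp (-x ^ 2 / (4 * t)) ≤
      (4 * s) ^ s / (2 * √π) * x ^ (1 - 2 * s) * t ^ (s - 3 / 2) := by
  have hexp : exp (-x ^ 2 / (4 * t)) ≤ s ^ s * (x ^ 2 / (4 * t)) ^ (-s) := by
    rw [neg_div]
    exact exp_neg_le_rpow_mul_rpow_neg hs (by positivity)
  calc x / (2 * √π * t ^ ((3 : ℝ) / 2)) * exp (-x ^ 2 / (4 * t))
      ≤ x / (2 * √π * t ^ ((3 : ℝ) / 2)) * (s ^ s * (x ^ 2 / (4 * t)) ^ (-s)) :=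
        mul_le_mul_of_nonneg_left hexp (by positivity)
    _ = (4 * s) ^ s / (2 * √π) * x ^ (1 - 2 * s) * t ^ (s - 3 / 2) := by
      have hx2 : (x ^ 2) ^ s = x ^ (2 * s) := by
        rw [← rpow_natCast, ← rpow_mul hx.le]
        norm_num
      rw [rpow_neg (by positivity), div_rpow (by positivity) (by positivity),
        mul_rpow (by norm_num) ht.le, mul_rpow (by norm_num) hs.le, rpow_sub hx, rpow_one,
        rpow_sub ht, hx2]
      field_simp

theorem exp_neg_two_mul_pow_mul_sq_le {m : ℕ} (hm : 1 ≤ m) {t r : ℝ} (ht : 0 < t) (hr : 0 < r) :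
    exp (-(2 * t) ^ m * r ^ 2 / 2) ≤ t ^ (-(1 : ℝ) / 2) * r ^ (-(1 : ℝ) / m) := by
  have hm₀ : (0 : ℝ) < m := by exact_mod_cast hm
  have htwo : (2 : ℝ) ≤ 2 ^ m := le_self_pow₀ one_le_two (by omega)
  have hdecay : -(2 * t) ^ m * r ^ 2 / 2 ≤ -(t ^ m * r ^ 2) := by
    rw [mul_pow]
    nlinarith [mul_nonneg (mul_nonneg (sub_nonneg.mpr htwo) (pow_pos ht m).le) (sq_nonneg r)]
  calc exp (-(2 * t) ^ m * r ^ 2 / 2) ≤ exp (-(t ^ m * r ^ 2)) := exp_le_exp.mpr hdecay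
    _ ≤ (t ^ m * r ^ 2) ^ (-(1 / (2 * (m : ℝ)))) :=
        exp_neg_le_rpow_neg (by positivity)
          ((div_le_one (by positivity)).mpr (by linarith [(Nat.one_le_cast (α := ℝ)).mpr hm]))
          (by positivity)
    _ = t ^ (-(1 : ℝ) / 2) * r ^ (-(1 : ℝ) / m) := by
        rw [mul_rpow (by positivity) (by positivity), ← rpow_natCast t m, ← rpow_natCast r 2,
          ← rpow_mul ht.le, ← rpow_mul hr.le]
        congr 2 <;> field_simp
        norm_num

section ellipticFT

variable {m : ℕ} {lam x₀ : ℝ} {y : EuclideanSpace ℝ (Fin m)}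

theorem ellipticFT_nonneg (hx : 0 ≤ x₀) : 0 ≤ ellipticFT m lam x₀ y :=
  setIntegral_nonneg measurableSet_Ioi fun t (ht : 0 < t) ↦ by positivity

theorem ellipticFT_le_of_forall_le (hlam : 0 < lam) (hx : 0 ≤ x₀) {A : ℝ}
    (hA : ∀ t : ℝ, 0 < t → x₀ / (2 * √π * t ^ ((3 : ℝ) / 2)) * exp (-x₀ ^ 2 / (4 * t)) *
      exp (-(2 * t) ^ m * ‖y‖ ^ 2 / 2) ≤ A * t ^ (-(1 : ℝ) / 2)) :
    ellipticFT m lam x₀ y ≤ A * (√π / √lam) := by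
  have hint : IntegrableOn (fun t : ℝ ↦ t ^ (-(1 : ℝ) / 2) * exp (-lam * t)) (Ioi 0) := by
    simpa using integrableOn_rpow_mul_exp_neg_mul_rpow (p := 1) (s := -(1 : ℝ) / 2)
      (by norm_num) one_pos hlam
  rw [← integral_rpow_neg_half_mul_exp_neg_mul hlam, ← integral_const_mul, ellipticFT]
  refine integral_mono_of_nonneg ?_ (hint.const_mul A) ?_ <;>
    filter_upwards [self_mem_ae_restrict measurableSet_Ioi] with t (ht : 0 < t)
  · positivity
  · calc exp (-lam * t) * (x₀ / (2 * √π * t ^ ((3 : ℝ) / 2))) * exp (-x₀ ^ 2 / (4 * t)) *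
          exp (-(2 * t) ^ m * ‖y‖ ^ 2 / 2)
        = exp (-lam * t) * (x₀ / (2 * √π * t ^ ((3 : ℝ) / 2)) * exp (-x₀ ^ 2 / (4 * t)) *
          exp (-(2 * t) ^ m * ‖y‖ ^ 2 / 2)) := by ring
      _ ≤ exp (-lam * t) * (A * t ^ (-(1 : ℝ) / 2)) :=
          mul_le_mul_of_nonneg_left (hA t ht) (exp_nonneg _)
      _ = A * (t ^ (-(1 : ℝ) / 2) * exp (-lam * t)) := by ring

theorem ellipticFT_le_two_div_sqrt_mul_rpow_neg_one (hlam : 0 < lam) (hx : 0 < x₀) :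
    ellipticFT m lam x₀ y ≤ 2 / √lam * x₀ ^ (-1 : ℝ) := by
  have hA : ∀ t : ℝ, 0 < t → x₀ / (2 * √π * t ^ ((3 : ℝ) / 2)) * exp (-x₀ ^ 2 / (4 * t)) *
      exp (-(2 * t) ^ m * ‖y‖ ^ 2 / 2) ≤ 2 / √π * x₀ ^ (-1 : ℝ) * t ^ (-(1 : ℝ) / 2) := by
    intro t ht
    have hheat := div_mul_exp_neg_sq_div_le one_pos hx ht
    have hconst : (4 * 1 : ℝ) ^ (1 : ℝ) / (2 * √π) * x₀ ^ (1 - 2 * 1 : ℝ) * t ^ (1 - 3 / 2 : ℝ) =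
        2 / √π * x₀ ^ (-1 : ℝ) * t ^ (-(1 : ℝ) / 2) := by
      rw [show (1 - 2 * 1 : ℝ) = -1 by norm_num, show (1 - 3 / 2 : ℝ) = -(1 : ℝ) / 2 by norm_num,
        mul_one, rpow_one]
      ring
    have hgauss : exp (-(2 * t) ^ m * ‖y‖ ^ 2 / 2) ≤ 1 := by
      rw [exp_le_one_iff, neg_mul, neg_div, neg_nonpos]
      positivity
    rw [hconst] at hheat
    simpa using mul_le_mul hheat hgauss (exp_nonneg _) (by positivity)
  calc ellipticFT m lam x₀ y ≤ 2 / √π * x₀ ^ (-1 : ℝ) * (√π / √lam) :=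
        ellipticFT_le_of_forall_le hlam hx.le hA
    _ = 2 / √lam * x₀ ^ (-1 : ℝ) := by
        field_simp [(sqrt_pos.mpr pi_pos).ne']

theorem ellipticFT_le_rpow_neg_two_mul_rpow (hm : 1 ≤ m) (hlam : 0 < lam) (hx : 0 < x₀)
    (hy : 0 < ‖y‖) :
    ellipticFT m lam x₀ y ≤
      6 ^ ((3 : ℝ) / 2) / (2 * √lam) * x₀ ^ (-2 : ℝ) * ‖y‖ ^ (-(1 : ℝ) / m) := by
  set A := 6 ^ ((3 : ℝ) / 2) / (2 * √π) * x₀ ^ (-2 : ℝ) with hA_def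
  have hA : ∀ t : ℝ, 0 < t → x₀ / (2 * √π * t ^ ((3 : ℝ) / 2)) * exp (-x₀ ^ 2 / (4 * t)) *
      exp (-(2 * t) ^ m * ‖y‖ ^ 2 / 2) ≤ A * ‖y‖ ^ (-(1 : ℝ) / m) * t ^ (-(1 : ℝ) / 2) := by
    intro t ht
    have hheat := div_mul_exp_neg_sq_div_le (s := 3 / 2) (by norm_num) hx ht
    have hconst : (4 * (3 / 2) : ℝ) ^ ((3 : ℝ) / 2) / (2 * √π) * x₀ ^ (1 - 2 * (3 / 2) : ℝ) *
        t ^ ((3 / 2 : ℝ) - 3 / 2) = A := by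
      norm_num [hA_def]
    rw [hconst] at hheat
    calc _ ≤ A * (t ^ (-(1 : ℝ) / 2) * ‖y‖ ^ (-(1 : ℝ) / m)) :=
          mul_le_mul hheat (exp_neg_two_mul_pow_mul_sq_le hm ht hy) (exp_nonneg _) (by positivity)
      _ = _ := by ring
  calc ellipticFT m lam x₀ y ≤ A * ‖y‖ ^ (-(1 : ℝ) / m) * (√π / √lam) :=
        ellipticFT_le_of_forall_le hlam hx.le hA
    _ = _ := by
        rw [hA_def]
        field_simp [(sqrt_pos.mpr pi_pos).ne']

end ellipticFT

/-- Estimate (5.9): there is `c > 0` such that `I(x₀,y)² ≤ c x₀^{-2}` when `|y| ≤ 1` and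
`I(x₀,y)² ≤ c x₀^{-4} |y|^{-1/m}` when `|y| > 1`. -/
theorem stmt8 (m : ℕ) (hm : 1 ≤ m) (lam : ℝ) (hlam : 0 < lam) :
    ∃ c : ℝ, 0 < c ∧ ∀ x₀ : ℝ, 0 < x₀ → ∀ y : EuclideanSpace ℝ (Fin m),
      (‖y‖ ≤ 1 → (ellipticFT m lam x₀ y) ^ 2 ≤ c * x₀ ^ (-2 : ℝ)) ∧
      (1 < ‖y‖ → (ellipticFT m lam x₀ y) ^ 2 ≤ c * x₀ ^ (-4 : ℝ) * ‖y‖ ^ (-(1 : ℝ) / m)) := by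
  set A₁ := 2 / √lam
  set A₂ := (6 : ℝ) ^ ((3 : ℝ) / 2) / (2 * √lam)
  refine ⟨A₁ ^ 2 + A₂ ^ 2, by positivity, fun x₀ hx y ↦ ⟨fun _ ↦ ?_, fun hy ↦ ?_⟩⟩
  · calc ellipticFT m lam x₀ y ^ 2 ≤ (A₁ * x₀ ^ (-1 : ℝ)) ^ 2 :=
          pow_le_pow_left₀ (ellipticFT_nonneg hx.le)
            (ellipticFT_le_two_div_sqrt_mul_rpow_neg_one hlam hx) 2
      _ = A₁ ^ 2 * x₀ ^ (-2 : ℝ) := by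
          rw [mul_pow, ← rpow_mul_natCast hx.le]
          norm_num
      _ ≤ (A₁ ^ 2 + A₂ ^ 2) * x₀ ^ (-2 : ℝ) := by gcongr; exact le_add_of_nonneg_right (sq_nonneg _)
  · have hy_rpow_le_one : ‖y‖ ^ (-(1 : ℝ) / m) ≤ 1 :=
      rpow_le_one_of_one_le_of_nonpos hy.le
        (div_nonpos_of_nonpos_of_nonneg (by norm_num) m.cast_nonneg)
    calc ellipticFT m lam x₀ y ^ 2 ≤ (A₂ * x₀ ^ (-2 : ℝ) * ‖y‖ ^ (-(1 : ℝ) / m)) ^ 2 :=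
          pow_le_pow_left₀ (ellipticFT_nonneg hx.le)
            (ellipticFT_le_rpow_neg_two_mul_rpow hm hlam hx (one_pos.trans hy)) 2
      _ = A₂ ^ 2 * x₀ ^ (-4 : ℝ) * ‖y‖ ^ (-(1 : ℝ) / m) * ‖y‖ ^ (-(1 : ℝ) / m) := by
          rw [mul_pow, mul_pow, ← rpow_mul_natCast hx.le]
          norm_num
          ring
      _ ≤ (A₁ ^ 2 + A₂ ^ 2) * x₀ ^ (-4 : ℝ) * ‖y‖ ^ (-(1 : ℝ) / m) * 1 := by
          gcongr
          exact le_add_of_nonneg_left (sq_nonneg _)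
      _ = _ := mul_one _
end

section
/- Let m ≥ 1 be an integer. Then there exists a constant c > 0 (depending only on m) such that for all t > 0, x₀ > 0 and y ∈ ℝ^m: ∫₀^t (x₀²/(4π·s³))·exp(−x₀²/(2s))·exp(−(2s)^m·|y|²) ds ≤ c·( x₀^{−2}·1_{|y| ≤ 1} + x₀^{−4}·|y|^{−1/m}·1_{|y| > 1} )·e^{t}. -/
private lemma exp_cube (u : ℝ) (hu : 0 ≤ u) : u ^ 3 ≤ 27 * Real.exp u := by
  have h1 : u / 3 + 1 ≤ Real.exp (u / 3) := by
    have := Real.add_one_le_exp (u / 3); linarith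
  have h2 : (u / 3) ^ 3 ≤ Real.exp (u / 3) ^ 3 := by
    apply pow_le_pow_left₀ (by positivity) (by linarith)
  have h3 : Real.exp (u / 3) ^ 3 = Real.exp u := by
    rw [← Real.exp_nat_mul]
    congr 1
    push_cast
    ring
  nlinarith [h2, h3]

private lemma exp_neg_le_rpow {u α : ℝ} (hu : 0 < u) (hα : 0 < α) (hα1 : α ≤ 1) :
    Real.exp (-u) ≤ u ^ (-α) := by
  rcases le_or_gt 1 u with h | h
  · calc Real.exp (-u) ≤ u⁻¹ := by
          rw [Real.exp_neg]
          exact inv_anti₀ hu (by linarith [Real.add_one_le_exp u])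
    _ = u ^ (-1 : ℝ) := (Real.rpow_neg_one u).symm
    _ ≤ u ^ (-α) := Real.rpow_le_rpow_of_exponent_le h (by linarith)
  · calc Real.exp (-u) ≤ 1 := Real.exp_le_one_iff.mpr (by linarith)
    _ ≤ u ^ (-α) := Real.one_le_rpow_of_pos_of_le_one_of_nonpos hu h.le (by linarith)

set_option maxHeartbeats 1600000 in
/-- Estimate (5.10): there is a constant `c > 0`, depending only on `m`, such that for all
`t > 0`, `x₀ > 0` and `y ∈ ℝ^m`,
`∫₀^t (x₀²/(4π s³)) exp(-x₀²/(2s)) exp(-(2s)^m |y|²) ds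
  ≤ c (x₀^{-2} 1_{|y|≤1} + x₀^{-4} |y|^{-1/m} 1_{|y|>1}) e^t`. -/
theorem stmt9 (m : ℕ) (hm : 1 ≤ m) :
    ∃ c : ℝ, 0 < c ∧ ∀ t : ℝ, 0 < t → ∀ x₀ : ℝ, 0 < x₀ → ∀ y : EuclideanSpace ℝ (Fin m),
      (∫ s in (0:ℝ)..t,
          (x₀ ^ 2 / (4 * Real.pi * s ^ 3)) * Real.exp (-x₀ ^ 2 / (2 * s))
            * Real.exp (-(2 * s) ^ m * ‖y‖ ^ 2))
        ≤ c * ((if ‖y‖ ≤ 1 then x₀ ^ (-2 : ℝ) else 0)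
              + (if 1 < ‖y‖ then x₀ ^ (-4 : ℝ) * ‖y‖ ^ (-(1 : ℝ) / m) else 0))
            * Real.exp t := by
  refine ⟨55, by norm_num, fun t ht x₀ hx y => ?_⟩
  have hπ : (3:ℝ) < Real.pi := Real.pi_gt_three
  have hπ0 : (0:ℝ) < Real.pi := by linarith
  have hx2 : (0:ℝ) < x₀ ^ 2 := by positivity
  have hx4 : (0:ℝ) < x₀ ^ 4 := by positivity
  have hx0 : x₀ ≠ 0 := ne_of_gt hx
  have het : (1:ℝ) ≤ Real.exp t := Real.one_le_exp ht.le
  set f : ℝ → ℝ := fun s =>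
    x₀ ^ 2 / (4 * Real.pi * s ^ 3) * Real.exp (-x₀ ^ 2 / (2 * s))
      * Real.exp (-(2 * s) ^ m * ‖y‖ ^ 2) with hf
  have hxm2 : x₀ ^ (-2 : ℝ) = (x₀ ^ 2)⁻¹ := by
    rw [show (-2:ℝ) = -((2:ℕ):ℝ) by norm_num, Real.rpow_neg hx.le, Real.rpow_natCast]
  have hxm4 : x₀ ^ (-4 : ℝ) = (x₀ ^ 4)⁻¹ := by
    rw [show (-4:ℝ) = -((4:ℕ):ℝ) by norm_num, Real.rpow_neg hx.le, Real.rpow_natCast]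
  have hRHS0 : 0 ≤ ((if ‖y‖ ≤ 1 then x₀ ^ (-2 : ℝ) else 0)
      + (if 1 < ‖y‖ then x₀ ^ (-4 : ℝ) * ‖y‖ ^ (-(1 : ℝ) / m) else 0)) := by
    apply add_nonneg <;> split_ifs <;> positivity
  have hf0 : f 0 = 0 := by simp [hf]
  by_cases hint : IntervalIntegrable f MeasureTheory.volume 0 t
  swap
  · rw [intervalIntegral.integral_undef hint]
    exact mul_nonneg (mul_nonneg (by norm_num) hRHS0) (Real.exp_pos t).le
  have hE1 : ∀ s : ℝ, 0 < s → Real.exp (-x₀ ^ 2 / (2 * s)) ≤ 216 * s ^ 3 / x₀ ^ 6 := by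
    intro s hs
    have hs0 : s ≠ 0 := ne_of_gt hs
    have h3 := exp_cube (x₀ ^ 2 / (2 * s)) (by positivity)
    have hrw : -x₀ ^ 2 / (2 * s) = -(x₀ ^ 2 / (2 * s)) := by ring
    rw [hrw, Real.exp_neg]
    have key : x₀ ^ 6 / (216 * s ^ 3) ≤ Real.exp (x₀ ^ 2 / (2 * s)) := by
      rw [div_le_iff₀ (by positivity)]
      have hu3 : (x₀ ^ 2 / (2 * s)) ^ 3 = x₀ ^ 6 / (8 * s ^ 3) := by
        field_simp; ring
      rw [hu3, div_le_iff₀ (by positivity)] at h3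
      nlinarith [Real.exp_pos (x₀ ^ 2 / (2 * s))]
    calc (Real.exp (x₀ ^ 2 / (2 * s)))⁻¹ ≤ (x₀ ^ 6 / (216 * s ^ 3))⁻¹ :=
          inv_anti₀ (by positivity) key
      _ = 216 * s ^ 3 / x₀ ^ 6 := by rw [inv_div]
  have hAeq : ∀ s : ℝ, 0 < s →
      x₀ ^ 2 / (4 * Real.pi * s ^ 3) * (216 * s ^ 3 / x₀ ^ 6) = 54 / (Real.pi * x₀ ^ 4) := by
    intro s hs
    have hs0 : s ≠ 0 := ne_of_gt hs
    field_simp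
    ring
  rcases le_or_gt ‖y‖ 1 with hy | hy
  · -- case ‖y‖ ≤ 1
    simp only [if_pos hy, if_neg (not_lt.mpr hy), add_zero]
    have hKpos : (0:ℝ) < 54 / (Real.pi * x₀ ^ 4) := by positivity
    have hptA : ∀ s : ℝ, 0 ≤ s → f s ≤ 54 / (Real.pi * x₀ ^ 4) := by
      intro s hs
      rcases eq_or_lt_of_le hs with rfl | hs
      · rw [hf0]; exact hKpos.le
      · have hA0 : 0 ≤ x₀ ^ 2 / (4 * Real.pi * s ^ 3) := by positivity
        have hE2 : Real.exp (-(2 * s) ^ m * ‖y‖ ^ 2) ≤ 1 := by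
          apply Real.exp_le_one_iff.mpr
          have h0 : (0:ℝ) ≤ (2 * s) ^ m * ‖y‖ ^ 2 := by positivity
          nlinarith
        calc f s = x₀ ^ 2 / (4 * Real.pi * s ^ 3) * Real.exp (-x₀ ^ 2 / (2 * s))
              * Real.exp (-(2 * s) ^ m * ‖y‖ ^ 2) := by rw [hf]
          _ ≤ x₀ ^ 2 / (4 * Real.pi * s ^ 3) * (216 * s ^ 3 / x₀ ^ 6) * 1 := by
              apply mul_le_mul (mul_le_mul_of_nonneg_left (hE1 s hs) hA0) hE2
                (Real.exp_pos _).le (by positivity)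
          _ = 54 / (Real.pi * x₀ ^ 4) := by rw [hAeq s hs, mul_one]
    rcases le_or_gt t (x₀ ^ 2) with htx | htx
    · -- t ≤ x₀²
      have h1 : (∫ s in (0:ℝ)..t, f s) ≤ ∫ _s in (0:ℝ)..t, (54 / (Real.pi * x₀ ^ 4)) :=
        intervalIntegral.integral_mono_on ht.le hint intervalIntegrable_const
          (fun s hs => hptA s hs.1)
      rw [intervalIntegral.integral_const, smul_eq_mul, sub_zero] at h1
      have h2 : t * (54 / (Real.pi * x₀ ^ 4)) ≤ 55 * x₀ ^ (-2:ℝ) * Real.exp t := by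
        rw [hxm2]
        have e1 : t * (54 / (Real.pi * x₀ ^ 4)) ≤ x₀ ^ 2 * (54 / (Real.pi * x₀ ^ 4)) :=
          mul_le_mul_of_nonneg_right htx hKpos.le
        have e2 : x₀ ^ 2 * (54 / (Real.pi * x₀ ^ 4)) = 54 / Real.pi * (x₀ ^ 2)⁻¹ := by
          field_simp
        have e3 : 54 / Real.pi ≤ 18 := by rw [div_le_iff₀ hπ0]; nlinarith
        have e4 : (0:ℝ) < (x₀ ^ 2)⁻¹ := by positivity
        calc t * (54 / (Real.pi * x₀ ^ 4)) ≤ 54 / Real.pi * (x₀ ^ 2)⁻¹ := by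
              rw [← e2]; exact e1
          _ ≤ 18 * (x₀ ^ 2)⁻¹ := mul_le_mul_of_nonneg_right e3 e4.le
          _ ≤ 55 * (x₀ ^ 2)⁻¹ * Real.exp t := by
              have := mul_le_mul_of_nonneg_left het
                (by positivity : (0:ℝ) ≤ 55 * (x₀ ^ 2)⁻¹)
              rw [mul_one] at this
              linarith
      exact le_trans h1 h2
    · -- x₀² < t : split the integral at x₀²
      have hsub1 : Set.uIcc (0:ℝ) (x₀ ^ 2) ⊆ Set.uIcc (0:ℝ) t := by
        rw [Set.uIcc_of_le hx2.le, Set.uIcc_of_le ht.le]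
        exact Set.Icc_subset_Icc le_rfl htx.le
      have hsub2 : Set.uIcc (x₀ ^ 2) t ⊆ Set.uIcc (0:ℝ) t := by
        rw [Set.uIcc_of_le htx.le, Set.uIcc_of_le ht.le]
        exact Set.Icc_subset_Icc hx2.le le_rfl
      have hi1 := hint.mono_set hsub1
      have hi2 := hint.mono_set hsub2
      rw [← intervalIntegral.integral_add_adjacent_intervals hi1 hi2]
      have hp1 : (∫ s in (0:ℝ)..(x₀ ^ 2), f s) ≤ x₀ ^ 2 * (54 / (Real.pi * x₀ ^ 4)) := by
        have h1 : (∫ s in (0:ℝ)..(x₀ ^ 2), f s)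
            ≤ ∫ _s in (0:ℝ)..(x₀ ^ 2), (54 / (Real.pi * x₀ ^ 4)) :=
          intervalIntegral.integral_mono_on hx2.le hi1 intervalIntegrable_const
            (fun s hs => hptA s hs.1)
        rwa [intervalIntegral.integral_const, smul_eq_mul, sub_zero] at h1
      have h0mem : (0:ℝ) ∉ Set.uIcc (x₀ ^ 2) t := by
        rw [Set.uIcc_of_le htx.le]
        intro h0
        exact absurd h0.1 (not_le.mpr hx2)
      have hg2int : IntervalIntegrable (fun s : ℝ => x₀ ^ 2 / (4 * Real.pi) * s ^ (-3:ℝ))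
          MeasureTheory.volume (x₀ ^ 2) t :=
        (intervalIntegral.intervalIntegrable_rpow (Or.inr h0mem)).const_mul _
      have hp2 : (∫ s in (x₀ ^ 2)..t, f s)
          ≤ ∫ s in (x₀ ^ 2)..t, x₀ ^ 2 / (4 * Real.pi) * s ^ (-3:ℝ) := by
        apply intervalIntegral.integral_mono_on htx.le hi2 hg2int
        intro s hs
        have hs0 : 0 < s := lt_of_lt_of_le hx2 hs.1
        have hsne : s ≠ 0 := ne_of_gt hs0
        have hE2 : Real.exp (-(2 * s) ^ m * ‖y‖ ^ 2) ≤ 1 := by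
          apply Real.exp_le_one_iff.mpr
          have h0 : (0:ℝ) ≤ (2 * s) ^ m * ‖y‖ ^ 2 := by positivity
          nlinarith
        have hE1' : Real.exp (-x₀ ^ 2 / (2 * s)) ≤ 1 := by
          apply Real.exp_le_one_iff.mpr
          have h0 : (0:ℝ) ≤ x₀ ^ 2 / (2 * s) := by positivity
          have hrw : -x₀ ^ 2 / (2 * s) = -(x₀ ^ 2 / (2 * s)) := by ring
          rw [hrw]; linarith
        have hA0 : 0 ≤ x₀ ^ 2 / (4 * Real.pi * s ^ 3) := by positivity
        have hrpow : s ^ (-3:ℝ) = (s ^ 3)⁻¹ := by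
          rw [show (-3:ℝ) = -((3:ℕ):ℝ) by norm_num, Real.rpow_neg hs0.le, Real.rpow_natCast]
        calc f s = x₀ ^ 2 / (4 * Real.pi * s ^ 3) * Real.exp (-x₀ ^ 2 / (2 * s))
              * Real.exp (-(2 * s) ^ m * ‖y‖ ^ 2) := by rw [hf]
          _ ≤ x₀ ^ 2 / (4 * Real.pi * s ^ 3) * 1 * 1 := by
              apply mul_le_mul (mul_le_mul_of_nonneg_left hE1' hA0) hE2
                (Real.exp_pos _).le (by positivity)
          _ = x₀ ^ 2 / (4 * Real.pi) * s ^ (-3:ℝ) := by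
              rw [hrpow]; field_simp
      have hval : (∫ s in (x₀ ^ 2)..t, x₀ ^ 2 / (4 * Real.pi) * s ^ (-3:ℝ))
          ≤ (x₀ ^ 2)⁻¹ / (8 * Real.pi) := by
        rw [intervalIntegral.integral_const_mul,
          integral_rpow (Or.inr ⟨by norm_num, h0mem⟩),
          show ((-3:ℝ) + 1) = (-2:ℝ) by norm_num]
        have hx2m : (x₀ ^ 2) ^ ((-2:ℝ)) = (x₀ ^ 4)⁻¹ := by
          rw [show (-2:ℝ) = -((2:ℕ):ℝ) by norm_num, Real.rpow_neg hx2.le,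
            Real.rpow_natCast, ← pow_mul]
        have htm : (0:ℝ) ≤ t ^ ((-2:ℝ)) := Real.rpow_nonneg ht.le _
        rw [hx2m]
        have hb : (t ^ ((-2:ℝ)) - (x₀ ^ 4)⁻¹) / ((-2:ℝ)) ≤ (x₀ ^ 4)⁻¹ / 2 := by
          have e : (t ^ ((-2:ℝ)) - (x₀ ^ 4)⁻¹) / ((-2:ℝ))
              = ((x₀ ^ 4)⁻¹ - t ^ ((-2:ℝ))) / 2 := by ring
          rw [e]; linarith
        calc x₀ ^ 2 / (4 * Real.pi) * ((t ^ ((-2:ℝ)) - (x₀ ^ 4)⁻¹) / ((-2:ℝ)))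
            ≤ x₀ ^ 2 / (4 * Real.pi) * ((x₀ ^ 4)⁻¹ / 2) :=
              mul_le_mul_of_nonneg_left hb (by positivity)
          _ = (x₀ ^ 2)⁻¹ / (8 * Real.pi) := by field_simp; ring
      have e2 : x₀ ^ 2 * (54 / (Real.pi * x₀ ^ 4)) = 54 / Real.pi * (x₀ ^ 2)⁻¹ := by
        field_simp
      have e3 : 54 / Real.pi ≤ 18 := by rw [div_le_iff₀ hπ0]; nlinarith
      have e4 : (0:ℝ) < (x₀ ^ 2)⁻¹ := by positivity
      have e5 : (x₀ ^ 2)⁻¹ / (8 * Real.pi) ≤ (x₀ ^ 2)⁻¹ := by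
        rw [div_le_iff₀ (by positivity)]
        nlinarith
      rw [hxm2]
      calc (∫ s in (0:ℝ)..(x₀ ^ 2), f s) + ∫ s in (x₀ ^ 2)..t, f s
          ≤ x₀ ^ 2 * (54 / (Real.pi * x₀ ^ 4)) + (x₀ ^ 2)⁻¹ / (8 * Real.pi) :=
            add_le_add hp1 (le_trans hp2 hval)
        _ = 54 / Real.pi * (x₀ ^ 2)⁻¹ + (x₀ ^ 2)⁻¹ / (8 * Real.pi) := by rw [e2]
        _ ≤ 18 * (x₀ ^ 2)⁻¹ + (x₀ ^ 2)⁻¹ :=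
            add_le_add (mul_le_mul_of_nonneg_right e3 e4.le) e5
        _ ≤ 55 * (x₀ ^ 2)⁻¹ * Real.exp t := by
            have := mul_le_mul_of_nonneg_left het
              (by positivity : (0:ℝ) ≤ 55 * (x₀ ^ 2)⁻¹)
            rw [mul_one] at this
            linarith
  · -- case 1 < ‖y‖
    simp only [if_neg (not_le.mpr hy), if_pos hy, zero_add]
    have hm0 : (0:ℝ) < (m:ℝ) := by
      have : 0 < m := hm
      exact_mod_cast this
    have hmne : (m:ℝ) ≠ 0 := ne_of_gt hm0
    have hm1 : (1:ℝ) ≤ (m:ℝ) := by exact_mod_cast hm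
    have hy0 : (0:ℝ) < ‖y‖ := lt_trans zero_lt_one hy
    set α : ℝ := 1 / (2 * (m:ℝ)) with hαdef
    have hα0 : 0 < α := by rw [hαdef]; positivity
    have hα1 : α ≤ 1 := by
      rw [hαdef, div_le_one (by positivity)]
      linarith
    set D : ℝ := 54 / (Real.pi * x₀ ^ 4) * ‖y‖ ^ (-(1:ℝ) / m) with hD
    have hYpos : (0:ℝ) ≤ ‖y‖ ^ (-(1:ℝ) / m) := Real.rpow_nonneg (norm_nonneg y) _
    have hD0 : 0 ≤ D := by
      rw [hD]; positivity
    have hptB : ∀ s ∈ Set.Icc (0:ℝ) t, f s ≤ D * s ^ (-(1:ℝ)/2) := by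
      intro s hs
      rcases eq_or_lt_of_le hs.1 with rfl | hs0
      · rw [hf0, Real.zero_rpow (by norm_num : (-(1:ℝ)/2) ≠ 0), mul_zero]
      · have hsne : s ≠ 0 := ne_of_gt hs0
        have hA0 : 0 ≤ x₀ ^ 2 / (4 * Real.pi * s ^ 3) := by positivity
        have hu : 0 < (2 * s) ^ m * ‖y‖ ^ 2 := by positivity
        have eA : (((2 * s) ^ m : ℝ)) ^ (-α) = (2 * s) ^ (-(1:ℝ)/2) := by
          rw [← Real.rpow_natCast (2 * s) m,
            ← Real.rpow_mul (by positivity : (0:ℝ) ≤ 2 * s)]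
          congr 1
          rw [hαdef]
          field_simp
          try ring
        have eB : ((‖y‖ ^ 2 : ℝ)) ^ (-α) = ‖y‖ ^ (-(1:ℝ) / m) := by
          rw [← Real.rpow_natCast ‖y‖ 2, ← Real.rpow_mul (norm_nonneg y)]
          congr 1
          rw [hαdef]
          field_simp
          try ring
        have hE2 : Real.exp (-(2 * s) ^ m * ‖y‖ ^ 2)
            ≤ (2 * s) ^ (-(1:ℝ)/2) * ‖y‖ ^ (-(1:ℝ) / m) := by
          rw [neg_mul]
          refine le_trans (exp_neg_le_rpow hu hα0 hα1) (le_of_eq ?_)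
          rw [Real.mul_rpow (by positivity) (by positivity), eA, eB]
        have h2s : (2 * s) ^ (-(1:ℝ)/2) ≤ s ^ (-(1:ℝ)/2) := by
          rw [Real.mul_rpow (by norm_num : (0:ℝ) ≤ 2) hs0.le]
          have h21 : (2:ℝ) ^ (-(1:ℝ)/2) ≤ 1 :=
            Real.rpow_le_one_of_one_le_of_nonpos (by norm_num) (by norm_num)
          have hsp : (0:ℝ) ≤ s ^ (-(1:ℝ)/2) := Real.rpow_nonneg hs0.le _
          nlinarith
        calc f s = x₀ ^ 2 / (4 * Real.pi * s ^ 3) * Real.exp (-x₀ ^ 2 / (2 * s))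
              * Real.exp (-(2 * s) ^ m * ‖y‖ ^ 2) := by rw [hf]
          _ ≤ x₀ ^ 2 / (4 * Real.pi * s ^ 3) * (216 * s ^ 3 / x₀ ^ 6)
              * ((2 * s) ^ (-(1:ℝ)/2) * ‖y‖ ^ (-(1:ℝ) / m)) := by
              apply mul_le_mul (mul_le_mul_of_nonneg_left (hE1 s hs0) hA0) hE2
                (Real.exp_pos _).le (by positivity)
          _ ≤ x₀ ^ 2 / (4 * Real.pi * s ^ 3) * (216 * s ^ 3 / x₀ ^ 6)
              * (s ^ (-(1:ℝ)/2) * ‖y‖ ^ (-(1:ℝ) / m)) := by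
              apply mul_le_mul_of_nonneg_left
                (mul_le_mul_of_nonneg_right h2s hYpos)
              positivity
          _ = D * s ^ (-(1:ℝ)/2) := by
              rw [hAeq s hs0, hD]; ring
    have hgBint : IntervalIntegrable (fun s : ℝ => D * s ^ (-(1:ℝ)/2))
        MeasureTheory.volume 0 t :=
      (intervalIntegral.intervalIntegrable_rpow' (by norm_num)).const_mul _
    have hmono := intervalIntegral.integral_mono_on ht.le hint hgBint hptB
    rw [intervalIntegral.integral_const_mul, integral_rpow (Or.inl (by norm_num)),
      Real.zero_rpow (by norm_num : (-(1:ℝ)/2 + 1) ≠ 0), sub_zero] at hmono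
    have hTle : t ^ (-(1:ℝ)/2 + 1) ≤ Real.exp t := by
      rw [show (-(1:ℝ)/2 + 1) = (1:ℝ)/2 by norm_num]
      rcases le_or_gt t 1 with h | h
      · exact le_trans (Real.rpow_le_one ht.le h (by norm_num)) het
      · calc t ^ ((1:ℝ)/2) ≤ t ^ (1:ℝ) :=
              Real.rpow_le_rpow_of_exponent_le h.le (by norm_num)
          _ = t := Real.rpow_one t
          _ ≤ Real.exp t := by linarith [Real.add_one_le_exp t]
    have hTpos : (0:ℝ) ≤ t ^ (-(1:ℝ)/2 + 1) := Real.rpow_nonneg ht.le _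
    calc (∫ s in (0:ℝ)..t, f s) ≤ D * (t ^ (-(1:ℝ)/2 + 1) / (-(1:ℝ)/2 + 1)) := hmono
      _ = 2 * D * t ^ (-(1:ℝ)/2 + 1) := by
          rw [show (-(1:ℝ)/2 + 1) = (2:ℝ)⁻¹ by norm_num]
          ring
      _ ≤ 2 * D * Real.exp t :=
          mul_le_mul_of_nonneg_left hTle (by linarith)
      _ ≤ 55 * (x₀ ^ (-4:ℝ) * ‖y‖ ^ (-(1:ℝ) / m)) * Real.exp t := by
          apply mul_le_mul_of_nonneg_right _ (Real.exp_pos t).le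
          rw [hxm4, hD]
          have h36 : 108 / Real.pi ≤ 36 := by rw [div_le_iff₀ hπ0]; nlinarith
          calc 2 * (54 / (Real.pi * x₀ ^ 4) * ‖y‖ ^ (-(1:ℝ) / m))
              = 108 / Real.pi * ((x₀ ^ 4)⁻¹ * ‖y‖ ^ (-(1:ℝ) / m)) := by
                field_simp; ring
            _ ≤ 55 * ((x₀ ^ 4)⁻¹ * ‖y‖ ^ (-(1:ℝ) / m)) := by
                apply mul_le_mul_of_nonneg_right (by linarith) (by positivity)
end
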